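/- arXiv:1107.1880 — 5 statements merged into one kernel-verified Lean document; each statement's English description precedes it below -/
import Mathlib

section
/- Sequential aggregation increases uncertainty: for trust triples x and y, the uncertainty component of f(x,y) is at least max(x_u, y_u), where x_u and y_u are the uncertainties of x and y. -/
/-- Sequential aggregation increases uncertainty. -/
theorem seq_aggregation_increases_uncertainty
    (xt xd xu yt yd yu : ℝ)
    (hxt : 0 ≤ xt) (hxd : 0 ≤ xd) (hxu : 0 ≤ xu) (hx : xt + xd + xu = 1)
    (hyt : 0 ≤ yt) (hyd : 0 ≤ yd) (hyu : 0 ≤ yu) (hy : yt + yd + yu = 1) :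
    max xu yu ≤ 1 - (xt * yt + xd * yd) - (xd * yt + xt * yd) := by
  rcases max_cases xu yu with ⟨h, _⟩ | ⟨h, _⟩ <;> rw [h] <;> nlinarith [mul_nonneg (add_nonneg hxt hxd) (add_nonneg hyt hyd), mul_nonneg hxu hyu, mul_nonneg hxu (add_nonneg hyt hyd), mul_nonneg hyu (add_nonneg hxt hxd)]
end

section
/- Sequential aggregation is associative: for trust triples x, y, z (identified by their trust and distrust components), f(f(x,y),z) = f(x,f(y,z)). -/
/-- Sequential aggregation on (trust, distrust) pairs. -/
def seqf (x y : ℝ × ℝ) : ℝ × ℝ :=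
  (x.1 * y.1 + x.2 * y.2, x.2 * y.1 + x.1 * y.2)

/-- Sequential aggregation is associative. -/
theorem seqf_assoc (x y z : ℝ × ℝ)
    (hx : 0 ≤ x.1 ∧ 0 ≤ x.2 ∧ x.1 + x.2 ≤ 1)
    (hy : 0 ≤ y.1 ∧ 0 ≤ y.2 ∧ y.1 + y.2 ≤ 1)
    (hz : 0 ≤ z.1 ∧ 0 ≤ z.2 ∧ z.1 + z.2 ≤ 1) :
    seqf (seqf x y) z = seqf x (seqf y z) := by
  simp only [seqf]; exact Prod.ext (by ring) (by ring)
end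

section
/- The triple ⟨1,0,0⟩ is a two-sided identity for the sequential aggregation operation '.' on the set T = {⟨x,y,z⟩ ∈ [0,1]³ : x+y+z = 1}, and (T, ·, ⟨1,0,0⟩) is a commutative monoid. -/
/-- The set of trust triples. -/
def Tset : Set (ℝ × ℝ × ℝ) :=
  {x | 0 ≤ x.1 ∧ 0 ≤ x.2.1 ∧ 0 ≤ x.2.2 ∧ x.1 + x.2.1 + x.2.2 = 1}

/-- Sequential aggregation (the monoid law ".") on trust triples. -/
def seqMul (x y : ℝ × ℝ × ℝ) : ℝ × ℝ × ℝ :=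
  (x.1 * y.1 + x.2.1 * y.2.1,
   x.1 * y.2.1 + x.2.1 * y.1,
   1 - x.1 * y.1 - x.1 * y.2.1 - x.2.1 * y.2.1 - x.2.1 * y.1)

/-- `(T, ·, ⟨1,0,0⟩)` is a commutative monoid: closure,
two-sided identity `⟨1,0,0⟩`, associativity and commutativity. -/
theorem seqMul_commMonoid :
    (∀ x ∈ Tset, ∀ y ∈ Tset, seqMul x y ∈ Tset) ∧
    (∀ x ∈ Tset, seqMul x (1, 0, 0) = x ∧ seqMul (1, 0, 0) x = x) ∧
    (∀ x ∈ Tset, ∀ y ∈ Tset, ∀ z ∈ Tset,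
      seqMul (seqMul x y) z = seqMul x (seqMul y z)) ∧
    (∀ x ∈ Tset, ∀ y ∈ Tset, seqMul x y = seqMul y x) := by
  refine ⟨?_, ?_, ?_, ?_⟩
  · rintro ⟨a, b, c⟩ ⟨ha, hb, hc, habc⟩ ⟨d, e, f⟩ ⟨hd, he, hf, hdef⟩
    refine ⟨by simp only [seqMul]; nlinarith [mul_nonneg ha hd, mul_nonneg hb he],
      by simp only [seqMul]; nlinarith [mul_nonneg ha he, mul_nonneg hb hd],
      ?_, by simp [seqMul]; ring⟩
    simp only [seqMul]
    nlinarith [mul_nonneg ha hf, mul_nonneg hb hf, mul_nonneg hc hd,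
      mul_nonneg hc he, mul_nonneg hc hf]
  · rintro ⟨a, b, c⟩ ⟨ha, hb, hc, habc⟩
    constructor <;> · simp only [seqMul, Prod.mk.injEq]; norm_num; linarith
  · intro x _ y _ z _
    simp only [seqMul, Prod.mk.injEq]; refine ⟨by ring, by ring, by ring⟩
  · intro x _ y _
    simp only [seqMul, Prod.mk.injEq]; refine ⟨by ring, by ring, by ring⟩
end

section
/- The triple ⟨0,1,0⟩ is a two-sided identity for the parallel aggregation operation '+' on T, and (T, +, ⟨0,1,0⟩) is a commutative monoid. -/
/-- Parallel aggregation (the monoid law "+") on trust triples. -/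
def parAdd (x y : ℝ × ℝ × ℝ) : ℝ × ℝ × ℝ :=
  (x.1 + y.1 - x.1 * y.1,
   x.2.1 * y.2.1,
   (1 - x.1) * (1 - y.1) - x.2.1 * y.2.1)

/-- `(T, +, ⟨0,1,0⟩)` is a commutative monoid: closure,
two-sided identity `⟨0,1,0⟩`, associativity and commutativity. -/
theorem parAdd_commMonoid :
    (∀ x ∈ Tset, ∀ y ∈ Tset, parAdd x y ∈ Tset) ∧
    (∀ x ∈ Tset, parAdd x (0, 1, 0) = x ∧ parAdd (0, 1, 0) x = x) ∧
    (∀ x ∈ Tset, ∀ y ∈ Tset, ∀ z ∈ Tset,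
      parAdd (parAdd x y) z = parAdd x (parAdd y z)) ∧
    (∀ x ∈ Tset, ∀ y ∈ Tset, parAdd x y = parAdd y x) := by
  refine ⟨?_, ?_, ?_, ?_⟩
  · rintro ⟨a, b, u⟩ ⟨ha, hb, hu, hs⟩ ⟨c, d, v⟩ ⟨hc, hd, hv, ht⟩
    simp only [Tset, parAdd, Set.mem_setOf_eq] at *
    refine ⟨by nlinarith, by positivity, by nlinarith, by ring⟩
  · rintro ⟨a, b, u⟩ ⟨ha, hb, hu, hs⟩
    constructor <;> simp [parAdd, Prod.ext_iff] <;> linarith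
  · rintro ⟨a, b, u⟩ _ ⟨c, d, v⟩ _ ⟨e, f, w⟩ _
    simp [parAdd, Prod.ext_iff]; exact ⟨by ring, by ring, by ring⟩
  · rintro ⟨a, b, u⟩ _ ⟨c, d, v⟩ _
    simp [parAdd, Prod.ext_iff]; exact ⟨by ring, by ring, by ring⟩
end

section
/- Let M be the monoid of trust triples under sequential aggregation, and let C be an n×n trust matrix over T with C_ii = ⟨1,0,0⟩ and C_ij = ⟨0,0,1⟩ when there is no edge, defined from a finite DAG G. Define the modified matrix product N = C*M by N_ij = Σ_{k≠j} C_ik · M_kj for i ≠ j (sum being parallel aggregation '+') and N_ii = ⟨1,0,0⟩. Then the sequence of powers C, C², C³, … (under *) is eventually constant: C^t = C^ℓ for all t ≥ ℓ, where ℓ is the length of the longest directed path in G. -/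
/-- Parallel aggregation of a list of trust triples. -/
def parSum (l : List (ℝ × ℝ × ℝ)) : ℝ × ℝ × ℝ := l.foldr parAdd (0, 1, 0)

/-- The modified trust matrix product: `(A*B)_ij = Σ_{k ≠ j} A_ik · B_kj`
(the sum being parallel aggregation) for `i ≠ j`, and `(A*B)_ii = ⟨1,0,0⟩`. -/
noncomputable def tMatMul {n : ℕ} (A B : Fin n → Fin n → ℝ × ℝ × ℝ) :
    Fin n → Fin n → ℝ × ℝ × ℝ := fun i j =>
  if i = j then (1, 0, 0)
  else parSum (((Finset.univ.erase j).toList).map fun k => seqMul (A i k) (B k j))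

/-- Powers of a trust matrix under the modified product. -/
noncomputable def tpow {n : ℕ} (C : Fin n → Fin n → ℝ × ℝ × ℝ) : ℕ → Fin n → Fin n → ℝ × ℝ × ℝ
  | 0 => fun i j => if i = j then (1, 0, 0) else (0, 0, 1)
  | d + 1 => tMatMul (tpow C d) C

/-- `IsPathFrom r i j l` : `l` lists the intermediate vertices of a directed path
`i → … → j`, which has `l.length + 1` edges. -/
def IsPathFrom {V : Type*} (r : V → V → Prop) (i j : V) (l : List V) : Prop :=
  List.Chain r i (l ++ [j])

/-! The distrust triple `⟨0,0,1⟩` is absorbing for `.` on both sides, so in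
`(C^{d+1})_ij = Σ_{k ≠ j} (C^d)_ik · C_kj` only the terms with an edge `k → j` can differ
from `⟨0,0,1⟩`. Hence the entry `(i, j)` of `C^{d+1}` only reads entries `(i, k)` of `C^d`
with `k → j`, and induction on `d` shows that `C^{d+1}_ij = C^d_ij` as soon as every path
from `i` to `j` has length at most `d`. With `d = ℓ` this gives `C^{ℓ+1} = C^ℓ`, and then
every later power equals `C^ℓ`. -/

lemma seqMul_distrust_left (y : ℝ × ℝ × ℝ) : seqMul (0, 0, 1) y = (0, 0, 1) := by
  simp [seqMul]

lemma seqMul_distrust_right (x : ℝ × ℝ × ℝ) : seqMul x (0, 0, 1) = (0, 0, 1) := by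
  simp [seqMul]

lemma parSum_eq_distrust {l : List (ℝ × ℝ × ℝ)} (hne : l ≠ []) (h : ∀ x ∈ l, x = (0, 0, 1)) :
    parSum l = (0, 0, 1) := by
  induction l with
  | nil => exact absurd rfl hne
  | cons a t ih =>
    obtain rfl : a = (0, 0, 1) := h a List.mem_cons_self
    rcases eq_or_ne t [] with rfl | ht
    · simp [parSum, parAdd]
    · change parAdd (0, 0, 1) (parSum t) = _
      rw [ih ht fun x hx => h x (List.mem_cons_of_mem _ hx)]
      simp [parAdd]

lemma IsPathFrom.nil_iff {V : Type*} {r : V → V → Prop} {i j : V} :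
    IsPathFrom r i j [] ↔ r i j :=
  List.isChain_pair

lemma IsPathFrom.snoc {V : Type*} {r : V → V → Prop} {i k j : V} {l : List V}
    (hl : IsPathFrom r i k l) (hkj : r k j) : IsPathFrom r i j (l ++ [k]) := by
  change List.IsChain r (i :: (l ++ [k])) at hl
  change List.IsChain r (i :: (l ++ [k] ++ [j]))
  simpa using List.isChain_cons_append_cons_cons.mpr ⟨hl, hkj, List.IsChain.singleton j⟩

section TrustMatrix

variable {n : ℕ}

lemma tMatMul_congr_left {A B C : Fin n → Fin n → ℝ × ℝ × ℝ} {i j : Fin n}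
    (h : ∀ k, k ≠ j → C k j ≠ (0, 0, 1) → A i k = B i k) :
    tMatMul A C i j = tMatMul B C i j := by
  unfold tMatMul
  split_ifs
  · rfl
  congr 1
  refine List.map_congr_left fun k hk => ?_
  have hkj : k ≠ j := by simpa using hk
  by_cases hC : C k j = (0, 0, 1)
  · rw [hC, seqMul_distrust_right, seqMul_distrust_right]
  · rw [h k hkj hC]

lemma tpow_diag (C : Fin n → Fin n → ℝ × ℝ × ℝ) (d : ℕ) (i : Fin n) :
    tpow C d i i = (1, 0, 0) := by
  cases d <;> simp [tpow, tMatMul]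

lemma tpow_zero_of_ne (C : Fin n → Fin n → ℝ × ℝ × ℝ) {i j : Fin n} (hij : i ≠ j) :
    tpow C 0 i j = (0, 0, 1) := by
  simp [tpow, hij]

lemma tpow_one_of_eq_distrust {C : Fin n → Fin n → ℝ × ℝ × ℝ} {i j : Fin n} (hij : i ≠ j)
    (hC : C i j = (0, 0, 1)) : tpow C 1 i j = (0, 0, 1) := by
  change tMatMul (tpow C 0) C i j = _
  rw [tMatMul, if_neg hij]
  refine parSum_eq_distrust ?_ ?_
  · have hi : i ∈ (Finset.univ.erase j).toList := by simp [hij]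
    exact List.ne_nil_of_mem (List.mem_map_of_mem hi)
  · simp only [List.mem_map]
    rintro _ ⟨k, -, rfl⟩
    rcases eq_or_ne i k with rfl | hik
    · rw [hC, seqMul_distrust_right]
    · rw [tpow_zero_of_ne C hik, seqMul_distrust_left]

lemma tpow_succ_apply_eq_of_forall_path_length_le {r : Fin n → Fin n → Prop}
    {C : Fin n → Fin n → ℝ × ℝ × ℝ} (hnoedge : ∀ i j, i ≠ j → ¬ r i j → C i j = (0, 0, 1))
    {d : ℕ} {i j : Fin n} (hpath : ∀ l, IsPathFrom r i j l → l.length + 1 ≤ d) :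
    tpow C (d + 1) i j = tpow C d i j := by
  induction d generalizing j with
  | zero =>
    rcases eq_or_ne i j with rfl | hij
    · rw [tpow_diag, tpow_diag]
    have hr : ¬ r i j := fun h => by simpa using hpath [] (IsPathFrom.nil_iff.mpr h)
    rw [tpow_one_of_eq_distrust hij (hnoedge i j hij hr), tpow_zero_of_ne C hij]
  | succ m ih =>
    refine tMatMul_congr_left fun k hkj hC => ih fun l hl => ?_
    have hkj' : r k j := by_contra fun hr => hC (hnoedge k j hkj hr)
    simpa using hpath _ (hl.snoc hkj')

lemma tpow_eq_of_le_of_tpow_succ_eq {C : Fin n → Fin n → ℝ × ℝ × ℝ} {ℓ : ℕ}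
    (hfix : tpow C (ℓ + 1) = tpow C ℓ) {t : ℕ} (ht : ℓ ≤ t) : tpow C t = tpow C ℓ := by
  induction t, ht using Nat.le_induction with
  | base => rfl
  | succ m _ ih =>
    change tMatMul (tpow C m) C = tpow C ℓ
    rw [ih]
    exact hfix

end TrustMatrix

theorem tpow_eventually_constant_general {n : ℕ}
    (r : Fin n → Fin n → Prop)
    (C : Fin n → Fin n → ℝ × ℝ × ℝ)
    (hnoedge : ∀ i j, i ≠ j → ¬ r i j → C i j = (0, 0, 1))
    (ℓ : ℕ)
    (hub : ∀ (i j : Fin n) (l : List (Fin n)), IsPathFrom r i j l → l.length + 1 ≤ ℓ) :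
    ∀ t, ℓ ≤ t → tpow C t = tpow C ℓ := fun _ ht =>
  tpow_eq_of_le_of_tpow_succ_eq
    (funext₂ fun i j => tpow_succ_apply_eq_of_forall_path_length_le hnoedge (hub i j)) ht

/-- for the trust matrix of a finite DAG, the sequence of powers
under the modified product is eventually constant: `C^t = C^ℓ` for all `t ≥ ℓ`,
where `ℓ` is the length of the longest directed path of the DAG. -/
theorem tpow_eventually_constant {n : ℕ}
    (r : Fin n → Fin n → Prop) (hacyclic : ∀ v, ¬ Relation.TransGen r v v)
    (C : Fin n → Fin n → ℝ × ℝ × ℝ)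
    (hT : ∀ i j, C i j ∈ Tset)
    (hdiag : ∀ i, C i i = (1, 0, 0))
    (hnoedge : ∀ i j, i ≠ j → ¬ r i j → C i j = (0, 0, 1))
    (ℓ : ℕ)
    (hub : ∀ (i j : Fin n) (l : List (Fin n)), IsPathFrom r i j l → l.length + 1 ≤ ℓ)
    (hach : ∃ (i j : Fin n) (l : List (Fin n)), IsPathFrom r i j l ∧ l.length + 1 = ℓ) :
    ∀ t, ℓ ≤ t → tpow C t = tpow C ℓ :=
  tpow_eventually_constant_general r C hnoedge ℓ hub
end
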